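/- Let X be a measurable space with finite measures μ, ν, γ and a symmetric measurable kernel κ : X × X → [0, ∞]. Suppose κμ ≤ κν holds γ-a.e., κγ = 1 holds μ-a.e. and ν-a.e., and all relevant double integrals are finite. Then μ(X) ≤ ν(X). -/
import Mathlib


open MeasureTheory

theorem mass_positivity_compact_case {X : Type*} [MeasurableSpace X]
    (μ ν γ : Measure X) [IsFiniteMeasure μ] [IsFiniteMeasure ν] [IsFiniteMeasure γ]
    (κ : X → X → ENNReal) (hκ : Measurable fun p : X × X => κ p.1 p.2)
    (hsymm : ∀ x y, κ x y = κ y x)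
    (hdom : ∀ᵐ x ∂γ, (∫⁻ y, κ x y ∂μ) ≤ ∫⁻ y, κ x y ∂ν)
    (hγμ : ∀ᵐ x ∂μ, (∫⁻ y, κ x y ∂γ) = 1)
    (hγν : ∀ᵐ x ∂ν, (∫⁻ y, κ x y ∂γ) = 1)
    (hfin1 : (∫⁻ x, (∫⁻ y, κ x y ∂γ) ∂μ) ≠ ⊤)
    (hfin2 : (∫⁻ x, (∫⁻ y, κ x y ∂γ) ∂ν) ≠ ⊤)
    (hfin3 : (∫⁻ x, (∫⁻ y, κ x y ∂ν) ∂γ) ≠ ⊤) :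
    μ Set.univ ≤ ν Set.univ := by
  have hκswap : Measurable fun p : X × X => κ p.2 p.1 := hκ.comp measurable_swap
  have h1 : μ Set.univ = ∫⁻ x, (∫⁻ y, κ x y ∂γ) ∂μ := by
    rw [lintegral_congr_ae hγμ, lintegral_one]
  have h2 : ν Set.univ = ∫⁻ x, (∫⁻ y, κ x y ∂γ) ∂ν := by
    rw [lintegral_congr_ae hγν, lintegral_one]
  rw [h1, h2]
  rw [lintegral_lintegral_swap hκ.aemeasurable, lintegral_lintegral_swap hκ.aemeasurable]
  calc ∫⁻ y, (∫⁻ x, κ x y ∂μ) ∂γ = ∫⁻ y, (∫⁻ x, κ y x ∂μ) ∂γ := by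
        simp only [hsymm]
    _ ≤ ∫⁻ y, (∫⁻ x, κ y x ∂ν) ∂γ := lintegral_mono_ae hdom
    _ = ∫⁻ y, (∫⁻ x, κ x y ∂ν) ∂γ := by simp only [hsymm]
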